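/- Let Γ((t,r),(s,q)) = ν ∫_{|t−s|}^{t+s} (1/√(π u)) e^{−(r−q)²/(2u)} du for ν > 0, t, s ≥ 0, r, q ∈ ℝ. Then for each fixed (t, r) ∈ ℝ⁺ × ℝ and s = t, the increment bound E[(a(t,r) − a(t,q))²] = 2(Γ((t,r),(t,r)) − Γ((t,r),(t,q))) ≤ C₁ |r − q| holds for a mean-zero Gaussian process a with covariance Γ at equal times, for some constant C₁ depending only on ν. -/

import Mathlib

/-!
With `m = (r - q)² / 2`, `Γ(r,r) - Γ(r,q) = ν/√π ∫₀^{2t} u^{-1/2} (1 - e^{-m/u}) du`. Since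
`1 - e^{-x} ≤ min 1 x`, the integrand is dominated by `u^{-1/2}` on `(0, m]` and by `m u^{-3/2}`
on `(m, ∞)`, whose integrals are both `2√m`; so the difference is at most `4ν√m/√π ≤ 2ν|r - q|`,
uniformly in `t`. The identity for the second moment of the increment is the expansion of the
square, using that `Γ(r,r)` does not depend on `r`.
-/

open MeasureTheory Real

/-- The equal-time covariance function `Γ((t,r),(t,q)) = ν ∫₀^{2t} (1/√(πu)) e^{−(r−q)²/(2u)} du`
of the Edwards-Wilkinson limit process. -/
noncomputable def GammaEq (ν t r q : ℝ) : ℝ :=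
  ν * ∫ u in Set.Ioc (0:ℝ) (2 * t),
    (1 / Real.sqrt (Real.pi * u)) * Real.exp (-(r - q) ^ 2 / (2 * u))

open Set

lemma integral_sub_sq_eq {Ω : Type*} [MeasurableSpace Ω] {μ : Measure Ω} {X Y : Ω → ℝ}
    (hX : MemLp X 2 μ) (hY : MemLp Y 2 μ) :
    ∫ ω, (X ω - Y ω) ^ 2 ∂μ =
      ∫ ω, X ω * X ω ∂μ - 2 * ∫ ω, X ω * Y ω ∂μ + ∫ ω, Y ω * Y ω ∂μ := by
  have hXX : Integrable (fun ω ↦ X ω * X ω) μ := hX.integrable_mul hX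
  have hXY : Integrable (fun ω ↦ 2 * (X ω * Y ω)) μ := (hX.integrable_mul hY).const_mul 2
  have hYY : Integrable (fun ω ↦ Y ω * Y ω) μ := hY.integrable_mul hY
  have hXXY : Integrable (fun ω ↦ X ω * X ω - 2 * (X ω * Y ω)) μ := hXX.sub hXY
  calc ∫ ω, (X ω - Y ω) ^ 2 ∂μ = ∫ ω, (X ω * X ω - 2 * (X ω * Y ω)) + Y ω * Y ω ∂μ := by
        congr 1; ext ω; ring
    _ = _ := by rw [integral_add hXXY hYY, integral_sub hXX hXY, integral_const_mul]

lemma integral_Ioc_zero_rpow_neg_half {m : ℝ} (hm : 0 ≤ m) :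
    ∫ u in Ioc 0 m, u ^ (-1 / 2 : ℝ) = 2 * √m := by
  rw [← intervalIntegral.integral_of_le hm, integral_rpow (by norm_num), sqrt_eq_rpow]
  norm_num
  ring

lemma integral_Ioi_rpow_neg_three_halves {m : ℝ} (hm : 0 < m) :
    ∫ u in Ioi m, u ^ (-3 / 2 : ℝ) = 2 / √m := by
  rw [integral_Ioi_rpow_of_lt (by norm_num) hm, sqrt_eq_rpow, div_eq_mul_inv 2, ← rpow_neg hm.le]
  norm_num
  ring

lemma integrableOn_rpow_neg_half_mul_exp (b : ℝ) {m : ℝ} (hm : 0 ≤ m) :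
    IntegrableOn (fun u ↦ u ^ (-1 / 2 : ℝ) * exp (-m / u)) (Ioc 0 b) := by
  refine (intervalIntegral.intervalIntegrable_rpow' (a := 0) (b := b) (r := -1 / 2)
    (by norm_num)).1.mono' (by fun_prop) ?_
  filter_upwards [ae_restrict_mem measurableSet_Ioc] with u hu
  obtain ⟨hu, -⟩ := hu
  have hexp : exp (-m / u) ≤ 1 :=
    exp_le_one_iff.2 (div_nonpos_of_nonpos_of_nonneg (by linarith) hu.le)
  rw [norm_mul, norm_of_nonneg (by positivity), norm_of_nonneg (by positivity)]
  exact mul_le_of_le_one_right (by positivity) hexp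

lemma integral_rpow_neg_half_mul_one_sub_exp_le (b : ℝ) {m : ℝ} (hm : 0 ≤ m) :
    ∫ u in Ioc 0 b, u ^ (-1 / 2 : ℝ) * (1 - exp (-m / u)) ≤ 4 * √m := by
  rcases hm.eq_or_lt with rfl | hm
  · simp
  set g : ℝ → ℝ := fun u ↦ u ^ (-1 / 2 : ℝ) * (1 - exp (-m / u))
  have hg_nonneg : ∀ u ∈ Ioi (0 : ℝ), 0 ≤ g u := fun u hu ↦
    mul_nonneg (rpow_nonneg (le_of_lt hu) _)
      (sub_nonneg.2 (exp_le_one_iff.2 (div_nonpos_of_nonpos_of_nonneg (by linarith) (le_of_lt hu))))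
  have hg_le_near : ∀ u ∈ Ioi (0 : ℝ), g u ≤ u ^ (-1 / 2 : ℝ) := fun u hu ↦
    mul_le_of_le_one_right (rpow_nonneg (le_of_lt hu) _) (by linarith [exp_pos (-m / u)])
  have hg_le_tail : ∀ u ∈ Ioi (0 : ℝ), g u ≤ m * u ^ (-3 / 2 : ℝ) := by
    intro u hu
    have hpow : u ^ (-3 / 2 : ℝ) = u ^ (-1 / 2 : ℝ) / u := by
      rw [← rpow_sub_one (ne_of_gt hu)]; norm_num
    calc g u ≤ u ^ (-1 / 2 : ℝ) * (m / u) := by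
          refine mul_le_mul_of_nonneg_left ?_ (rpow_nonneg (le_of_lt hu) _)
          linarith [add_one_le_exp (-m / u), neg_div u m]
      _ = m * u ^ (-3 / 2 : ℝ) := by rw [hpow]; ring
  have hg_meas : AEStronglyMeasurable g := by fun_prop
  have hnear_dom : IntegrableOn (fun u : ℝ ↦ u ^ (-1 / 2 : ℝ)) (Ioc 0 m) :=
    (intervalIntegral.intervalIntegrable_rpow' (r := -1 / 2) (by norm_num)).1
  have htail_dom : IntegrableOn (fun u : ℝ ↦ m * u ^ (-3 / 2 : ℝ)) (Ioi m) :=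
    (integrableOn_Ioi_rpow_of_lt (a := -3 / 2) (by norm_num) hm).const_mul m
  have hnear : IntegrableOn g (Ioc 0 m) := by
    refine hnear_dom.mono' hg_meas.restrict ?_
    filter_upwards [ae_restrict_mem measurableSet_Ioc] with u hu
    rw [norm_of_nonneg (hg_nonneg u hu.1)]
    exact hg_le_near u hu.1
  have htail : IntegrableOn g (Ioi m) := by
    refine htail_dom.mono' hg_meas.restrict ?_
    filter_upwards [ae_restrict_mem measurableSet_Ioi] with u hu
    rw [norm_of_nonneg (hg_nonneg u (hm.trans hu))]
    exact hg_le_tail u (hm.trans hu)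
  have hsplit : Ioc 0 m ∪ Ioi m = Ioi (0 : ℝ) := Ioc_union_Ioi_eq_Ioi hm.le
  have hg : IntegrableOn g (Ioi 0) := hsplit ▸ hnear.union htail
  calc ∫ u in Ioc 0 b, g u ≤ ∫ u in Ioi 0, g u :=
        setIntegral_mono_set hg ((ae_restrict_mem measurableSet_Ioi).mono hg_nonneg)
          Ioc_subset_Ioi_self.eventuallyLE
    _ = (∫ u in Ioc 0 m, g u) + ∫ u in Ioi m, g u := by
        rw [← hsplit, setIntegral_union (Ioc_disjoint_Ioi le_rfl) measurableSet_Ioi hnear htail]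
    _ ≤ (∫ u in Ioc 0 m, u ^ (-1 / 2 : ℝ)) + ∫ u in Ioi m, m * u ^ (-3 / 2 : ℝ) :=
        add_le_add
          (setIntegral_mono_on hnear hnear_dom measurableSet_Ioc fun u hu ↦ hg_le_near u hu.1)
          (setIntegral_mono_on htail htail_dom measurableSet_Ioi
            fun u hu ↦ hg_le_tail u (hm.trans hu))
    _ = 4 * √m := by
        rw [integral_Ioc_zero_rpow_neg_half hm.le, integral_const_mul,
          integral_Ioi_rpow_neg_three_halves hm]
        have hs : 0 < √m := sqrt_pos.2 hm
        field_simp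
        rw [sq_sqrt hm.le]
        ring

lemma GammaEq_eq_integral_rpow (ν t r q : ℝ) :
    GammaEq ν t r q =
      ν / √π * ∫ u in Ioc 0 (2 * t), u ^ (-1 / 2 : ℝ) * exp (-((r - q) ^ 2 / 2) / u) := by
  rw [GammaEq, div_eq_mul_inv, mul_assoc, ← integral_const_mul (√π)⁻¹]
  congr 1
  refine setIntegral_congr_fun measurableSet_Ioc fun u (hu : u ∈ Ioc 0 (2 * t)) ↦ ?_
  replace hu : 0 < u := hu.1
  have hpow : u ^ (-1 / 2 : ℝ) = (√u)⁻¹ := by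
    rw [sqrt_eq_rpow, ← rpow_neg hu.le]; norm_num
  rw [hpow, sqrt_mul pi_pos.le]
  field_simp

lemma GammaEq_self_eq (ν t r q : ℝ) : GammaEq ν t r r = GammaEq ν t q q := by
  simp only [GammaEq, sub_self]

lemma sqrt_sq_div_two_le (d : ℝ) : 2 * √(d ^ 2 / 2) ≤ √π * |d| := by
  calc 2 * √(d ^ 2 / 2) = √(2 * d ^ 2) := by
        rw [← sqrt_sq (zero_le_two : (0 : ℝ) ≤ 2), ← sqrt_mul (by norm_num)]
        congr 1; ring
    _ ≤ √(π * d ^ 2) := sqrt_le_sqrt (by nlinarith [pi_gt_three, sq_nonneg d])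
    _ = √π * |d| := by rw [sqrt_mul pi_pos.le, sqrt_sq_eq_abs]

lemma GammaEq_self_sub_le {ν : ℝ} (hν : 0 ≤ ν) (t r q : ℝ) :
    GammaEq ν t r r - GammaEq ν t r q ≤ 2 * ν * |r - q| := by
  have hm : 0 ≤ (r - q) ^ 2 / 2 := by positivity
  have hdiff : GammaEq ν t r r - GammaEq ν t r q = ν / √π *
      ∫ u in Ioc 0 (2 * t), u ^ (-1 / 2 : ℝ) * (1 - exp (-((r - q) ^ 2 / 2) / u)) := by
    rw [GammaEq_eq_integral_rpow, GammaEq_eq_integral_rpow, ← mul_sub,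
      ← integral_sub (integrableOn_rpow_neg_half_mul_exp _ (by simp))
        (integrableOn_rpow_neg_half_mul_exp _ hm)]
    simp only [sub_self, zero_pow two_ne_zero, zero_div, neg_zero, exp_zero, mul_one, mul_sub]
  have hsqrtpi : 0 < √π := sqrt_pos.2 pi_pos
  calc GammaEq ν t r r - GammaEq ν t r q ≤ ν / √π * (4 * √((r - q) ^ 2 / 2)) := by
        rw [hdiff]
        exact mul_le_mul_of_nonneg_left
          (integral_rpow_neg_half_mul_one_sub_exp_le _ hm) (by positivity)
    _ ≤ ν / √π * (2 * (√π * |r - q|)) :=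
        mul_le_mul_of_nonneg_left (by linarith [sqrt_sq_div_two_le (r - q)])
          (by positivity)
    _ = 2 * ν * |r - q| := by field_simp

theorem increment_bound_general {Ω : Type*} [MeasurableSpace Ω] (P : Measure Ω)
    (ν t : ℝ) (hν : 0 < ν)
    (a : ℝ → Ω → ℝ) (hL2 : ∀ r : ℝ, MemLp (a r) 2 P)
    (hcov : ∀ r q : ℝ, ∫ ω, a r ω * a q ω ∂P = GammaEq ν t r q) :
    (∀ r q : ℝ, ∫ ω, (a r ω - a q ω) ^ 2 ∂P = 2 * (GammaEq ν t r r - GammaEq ν t r q)) ∧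
    ∃ C₁ > 0, ∀ r q : ℝ, ∫ ω, (a r ω - a q ω) ^ 2 ∂P ≤ C₁ * |r - q| := by
  have hincr : ∀ r q : ℝ,
      ∫ ω, (a r ω - a q ω) ^ 2 ∂P = 2 * (GammaEq ν t r r - GammaEq ν t r q) := by
    intro r q
    rw [integral_sub_sq_eq (hL2 r) (hL2 q), hcov, hcov, hcov, GammaEq_self_eq ν t q r]
    ring
  refine ⟨hincr, 4 * ν, by positivity, fun r q ↦ ?_⟩
  rw [hincr]
  linarith [GammaEq_self_sub_le hν.le t r q]

/-- For a mean-zero (square-integrable) process `a(t,·)` with equal-time covariance `Γ`,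
the increment bound `E[(a(t,r) − a(t,q))²] = 2(Γ((t,r),(t,r)) − Γ((t,r),(t,q))) ≤ C₁|r − q|`
holds for some constant `C₁ > 0` depending only on `ν`. -/
theorem increment_bound {Ω : Type*} [MeasurableSpace Ω] (P : Measure Ω)
    [IsProbabilityMeasure P] (ν t : ℝ) (hν : 0 < ν) (ht : 0 < t)
    (a : ℝ → Ω → ℝ) (hL2 : ∀ r : ℝ, MemLp (a r) 2 P)
    (hcov : ∀ r q : ℝ, ∫ ω, a r ω * a q ω ∂P = GammaEq ν t r q) :
    (∀ r q : ℝ, ∫ ω, (a r ω - a q ω) ^ 2 ∂P = 2 * (GammaEq ν t r r - GammaEq ν t r q)) ∧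
    ∃ C₁ > 0, ∀ r q : ℝ, ∫ ω, (a r ω - a q ω) ^ 2 ∂P ≤ C₁ * |r - q| :=
  increment_bound_general P ν t hν a hL2 hcov
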